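/- arXiv:1812.10682 — 4 statements merged into one kernel-verified Lean document; each statement's English description precedes it below -/
import Mathlib

section
/- Let G be an abelian group and X ⊆ G a subset with 0 ∈ X. Suppose there exist m ∈ ℕ and a finite set A ⊆ G with X(m) + X(m) ⊆ A + X(m), where X(m) denotes the m-fold sum of X − X with itself. Then there exists a finite set A' ⊆ X(3m) with 0 ∈ A' and |A'| ≤ |A| + 1 such that X(m) + X(m) ⊆ A' + X(m). -/
open Pointwise

/-- `mSum X m` is the `m`-fold sum of `X - X` with itself. -/
def mSum {G : Type*} [AddCommGroup G] (X : Set G) : ℕ → Set G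
  | 0 => {0}
  | n + 1 => (X - X) + mSum X n

lemma mSum_add {G : Type*} [AddCommGroup G] (X : Set G) (p q : ℕ) :
    mSum X (p + q) = mSum X p + mSum X q := by
  induction p with
  | zero => simp [mSum]
  | succ n ih =>
      have : n + 1 + q = (n + q) + 1 := by ring
      rw [this]
      simp only [mSum, ih, add_assoc]

lemma neg_mem_mSum {G : Type*} [AddCommGroup G] {X : Set G} {n : ℕ} {x : G}
    (hx : x ∈ mSum X n) : -x ∈ mSum X n := by
  induction n generalizing x with
  | zero => simp_all [mSum]
  | succ n ih =>
      obtain ⟨d, ⟨a, ha, b, hb, rfl⟩, y, hy, rfl⟩ := hx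
      exact ⟨b - a, ⟨b, hb, a, ha, rfl⟩, -y, ih hy, by rw [neg_add, neg_sub]⟩

lemma zero_mem_mSum {G : Type*} [AddCommGroup G] {X : Set G} (hX : (0 : G) ∈ X) (n : ℕ) :
    (0 : G) ∈ mSum X n := by
  induction n with
  | zero => simp [mSum]
  | succ n ih =>
      exact ⟨0, by simpa using Set.sub_mem_sub hX hX, 0, ih, by simp⟩

theorem stmt0 {G : Type*} [AddCommGroup G] (X : Set G) (hX : (0 : G) ∈ X)
    (m : ℕ) (A : Set G) (hA : A.Finite)
    (h : mSum X m + mSum X m ⊆ A + mSum X m) :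
    ∃ A' : Set G, A'.Finite ∧ A' ⊆ mSum X (3 * m) ∧ (0 : G) ∈ A' ∧
      Nat.card A' ≤ Nat.card A + 1 ∧
      mSum X m + mSum X m ⊆ A' + mSum X m := by
  classical
  set S : Set G := {a ∈ A | ∃ t ∈ mSum X m, a + t ∈ mSum X m + mSum X m} with hS
  refine ⟨insert 0 S, ?_, ?_, Set.mem_insert _ _, ?_, ?_⟩
  · exact Set.Finite.insert _ (hA.subset (Set.sep_subset _ _))
  · intro a ha
    rcases ha with rfl | ⟨haA, t, ht, hat⟩
    · exact zero_mem_mSum hX _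
    · have h2 : mSum X m + mSum X m = mSum X (m + m) := (mSum_add X m m).symm
      have : a = (a + t) + (-t) := by abel
      rw [this, show 3 * m = (m + m) + m by ring, mSum_add]
      exact Set.add_mem_add (h2 ▸ hat) (neg_mem_mSum ht)
  · rw [Nat.card_coe_set_eq, Nat.card_coe_set_eq]
    calc (insert (0:G) S).ncard ≤ S.ncard + 1 :=
          Set.ncard_insert_le _ _
      _ ≤ A.ncard + 1 :=
          Nat.add_le_add_right (Set.ncard_le_ncard (Set.sep_subset _ _) hA) 1
  · intro z hz
    obtain ⟨a, haA, t, ht, rfl⟩ := h hz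
    exact Set.add_mem_add (Set.mem_insert_of_mem _ ⟨haA, t, ht, hz⟩) ht
end

section
/- Let p : ℝ^ℕ → ℝ^{2n+2} be the projection onto the first 2n+2 coordinates and let X(n) ⊆ ℝ^ℕ be the set of sequences with at most 2n nonzero coordinates. Then for every finite set A ⊆ ℝ^ℕ, the set p(A + X(n)) is not all of ℝ^{2n+2}. -/
/-!
A sequence with at most `2n` nonzero coordinates vanishes at one of the first `2n + 2`
coordinates, so every point of `p (a + X(n))` agrees with `p a` in some coordinate. Hence
`p (A + X(n))` lies in finitely many affine coordinate hyperplanes, a Lebesgue-null set.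
-/

open Pointwise

/-- Sequences with at most `2n` nonzero coordinates. -/
def fewCoord (n : ℕ) : Set (ℕ → ℝ) :=
  {f | ∃ s : Finset ℕ, s.card ≤ 2 * n ∧ ∀ j ∉ s, f j = 0}

open MeasureTheory

lemma Finset.exists_fin_val_notMem {m : ℕ} {s : Finset ℕ} (hs : s.card < m) :
    ∃ j : Fin m, (j : ℕ) ∉ s := by
  obtain ⟨j, hj, hjs⟩ :=
    Finset.exists_mem_notMem_of_card_lt_card (t := Finset.range m) (by simpa using hs)
  exact ⟨⟨j, Finset.mem_range.1 hj⟩, hjs⟩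

lemma image_add_fewCoord_subset_iUnion_hyperplane {m n : ℕ} (hm : 2 * n < m)
    (A : Set (ℕ → ℝ)) :
    (fun f : ℕ → ℝ => fun i : Fin m => f i) '' (A + fewCoord n) ⊆
      ⋃ a ∈ A, ⋃ j : Fin m, {g | g j = a j} := by
  rintro _ ⟨_, ⟨a, ha, x, ⟨s, hcard, hx⟩, rfl⟩, rfl⟩
  obtain ⟨j, hj⟩ := Finset.exists_fin_val_notMem (m := m) (by omega : s.card < m)
  refine Set.mem_biUnion ha (Set.mem_iUnion.2 ⟨j, ?_⟩)
  simp [hx _ hj]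

lemma volume_iUnion_hyperplane {m : ℕ} {A : Set (ℕ → ℝ)} (hA : A.Countable) :
    volume (⋃ a ∈ A, ⋃ j : Fin m, {g : Fin m → ℝ | g j = a j}) = 0 :=
  (measure_biUnion_null_iff hA).2 fun a _ =>
    measure_iUnion_null fun j => by
      rw [volume_pi]
      exact Measure.pi_hyperplane (fun _ : Fin m => (volume : Measure ℝ)) j (a j)

theorem stmt6 (n : ℕ) (A : Set (ℕ → ℝ)) (hA : A.Finite) :
    (fun f : ℕ → ℝ => fun i : Fin (2 * n + 2) => f i) '' (A + fewCoord n) ≠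
      Set.univ := by
  intro h
  have hcover := image_add_fewCoord_subset_iUnion_hyperplane (by omega : 2 * n < 2 * n + 2) A
  rw [h] at hcover
  exact Measure.measure_univ_ne_zero.2 (NeZero.ne volume)
    (measure_mono_null hcover (volume_iUnion_hyperplane hA.countable))
end

section
/- (Abstract form of the key claim in Proposition 3.1.) Let G be an abelian group, H ≤ G a subgroup, and π : G → V a surjective homomorphism with kernel H. Let Y ⊆ V be a symmetric subset containing 0, Γ ≤ V a subgroup with Y + Γ = V, and s : Y → G a section of π (π(s(y)) = y for all y ∈ Y) with s(0) = 0. Let Δ ≤ G be a subgroup such that π restricted to Δ is an isomorphism onto Γ. Set Δ₀ = {δ ∈ Δ : π(δ) ∈ Y(2)} and D = (Δ₀ + s(Y)(2)) ∩ H, where s(Y)(2) denotes the 2-fold sum of s(Y) − s(Y) with itself. Then for every n ∈ ℕ and all δ₁,…,δ_{2ⁿ} ∈ Δ and y₁,…,y_{2ⁿ} ∈ Y, if Σᵢ (δᵢ + s(yᵢ)) ∈ H then Σᵢ (δᵢ + s(yᵢ)) belongs to the subgroup generated by D. -/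
open Pointwise

lemma mem_mSum_two {G : Type*} [AddCommGroup G] {X : Set G} {a b c d : G}
    (ha : a ∈ X) (hb : b ∈ X) (hc : c ∈ X) (hd : d ∈ X) :
    (a - b) + (c - d) ∈ mSum X 2 := by
  have h1 : mSum X 2 = (X - X) + ((X - X) + ({0} : Set G)) := rfl
  have h2 : (a - b) + (c - d) = (a - b) + ((c - d) + 0) := by abel
  rw [h1, h2]
  exact Set.add_mem_add (Set.sub_mem_sub ha hb)
    (Set.add_mem_add (Set.sub_mem_sub hc hd) rfl)

theorem stmt11 {G V : Type*} [AddCommGroup G] [AddCommGroup V]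
    (π : G →+ V) (hsurj : Function.Surjective π)
    (Y : Set V) (hYsym : Y = -Y) (hY0 : (0 : V) ∈ Y)
    (Γ : AddSubgroup V) (hYΓ : Y + (Γ : Set V) = Set.univ)
    (s : V → G) (hs : ∀ y ∈ Y, π (s y) = y) (hs0 : s 0 = 0)
    (Δ : AddSubgroup G) (hΔinj : Set.InjOn π Δ) (hΔΓ : π '' Δ = Γ)
    (Δ₀ : Set G) (hΔ₀ : Δ₀ = {δ : G | δ ∈ Δ ∧ π δ ∈ mSum Y 2})
    (D : Set G) (hD : D = (Δ₀ + mSum (s '' Y) 2) ∩ (π.ker : Set G)) :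
    ∀ n : ℕ, ∀ δ : Fin (2 ^ n) → G, (∀ i, δ i ∈ Δ) →
      ∀ y : Fin (2 ^ n) → V, (∀ i, y i ∈ Y) →
        (∑ i, (δ i + s (y i))) ∈ π.ker →
          (∑ i, (δ i + s (y i))) ∈ AddSubgroup.closure D := by
  have hDsub : D ⊆ (π.ker : Set G) := by rw [hD]; exact Set.inter_subset_right
  -- key base-case fact
  have key : ∀ (a : G) (b : V), a ∈ Δ → b ∈ Y → a + s b ∈ π.ker → a + s b ∈ D := by
    intro a b ha hb hk
    rw [hD]
    refine ⟨?_, hk⟩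
    have hπ : π (a + s b) = 0 := hk
    rw [map_add, hs b hb] at hπ
    have hπa : π a = (0 - b) + (0 - 0) := by
      have : π a = -b := eq_neg_of_add_eq_zero_left hπ
      rw [this]; abel
    have haΔ₀ : a ∈ Δ₀ := by
      rw [hΔ₀]
      exact ⟨ha, hπa ▸ mem_mSum_two hY0 hb hY0 hY0⟩
    have hsb : s b ∈ mSum (s '' Y) 2 := by
      have : s b = (s b - s 0) + (s 0 - s 0) := by rw [hs0]; abel
      rw [this]
      exact mem_mSum_two ⟨b, hb, rfl⟩ ⟨0, hY0, rfl⟩ ⟨0, hY0, rfl⟩ ⟨0, hY0, rfl⟩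
    exact Set.add_mem_add haΔ₀ hsb
  intro n
  induction n with
  | zero =>
    intro δ hδ y hy hker
    have h1 : (∑ i : Fin (2 ^ 0), (δ i + s (y i))) = δ 0 + s (y 0) :=
      Fin.sum_univ_one _
    rw [h1] at hker ⊢
    exact AddSubgroup.subset_closure (key _ _ (hδ 0) (hy 0) hker)
  | succ n ih =>
    intro δ hδ y hy hker
    have hpow : 2 ^ n * 2 = 2 ^ (n + 1) := (pow_succ 2 n).symm
    let e : Fin (2 ^ n) × Fin 2 ≃ Fin (2 ^ (n + 1)) :=
      finProdFinEquiv.trans (finCongr hpow)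
    set T : Fin (2 ^ (n + 1)) → G := fun i => δ i + s (y i) with hT
    have hsum : (∑ i, T i) = ∑ k : Fin (2 ^ n), (T (e (k, 0)) + T (e (k, 1))) := by
      rw [← Equiv.sum_comp e T, Fintype.sum_prod_type]
      exact Finset.sum_congr rfl fun k _ => Fin.sum_univ_two _
    set a : Fin (2 ^ n) → Fin (2 ^ (n + 1)) := fun k => e (k, 0) with ha
    set b : Fin (2 ^ n) → Fin (2 ^ (n + 1)) := fun k => e (k, 1) with hb
    have hchoice : ∀ k : Fin (2 ^ n), ∃ w ∈ Y, ∃ β ∈ Δ,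
        π β = y (a k) + y (b k) - w := by
      intro k
      have hv : y (a k) + y (b k) ∈ Y + (Γ : Set V) := by
        rw [hYΓ]; trivial
      obtain ⟨w, hw, γ, hγ, hwγ⟩ := hv
      have hβ' : γ ∈ π '' (Δ : Set G) := by rw [hΔΓ]; exact hγ
      obtain ⟨β, hβ, hπβ⟩ := hβ'
      have hwγ' : w + γ = y (a k) + y (b k) := hwγ
      exact ⟨w, hw, β, hβ, by rw [hπβ, ← hwγ']; abel⟩
    choose w hw β hβ hπβ using hchoice
    set δ' : Fin (2 ^ n) → G := fun k => δ (a k) + δ (b k) + β k with hδ'def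
    set E : Fin (2 ^ n) → G := fun k => s (y (a k)) + s (y (b k)) - s (w k) - β k
      with hEdef
    have hδ'Δ : ∀ k, δ' k ∈ Δ := fun k =>
      add_mem (add_mem (hδ (a k)) (hδ (b k))) (hβ k)
    have hED : ∀ k, E k ∈ D := by
      intro k
      rw [hD]
      constructor
      · have hEeq : E k = (-β k) + ((s (y (a k)) - s (w k)) + (s (y (b k)) - s 0)) := by
          rw [hEdef]; simp only [hs0]; abel
        rw [hEeq]
        refine Set.add_mem_add ?_ ?_
        · rw [hΔ₀]
          refine ⟨neg_mem (hβ k), ?_⟩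
          have : π (-β k) = (w k - y (a k)) + (0 - y (b k)) := by
            rw [map_neg, hπβ k]; abel
          rw [this]
          exact mem_mSum_two (hw k) (hy (a k)) hY0 (hy (b k))
        · exact mem_mSum_two ⟨_, hy (a k), rfl⟩ ⟨_, hw k, rfl⟩
            ⟨_, hy (b k), rfl⟩ ⟨0, hY0, rfl⟩
      · show π (E k) = 0
        rw [hEdef]
        simp only [map_sub, map_add, hs _ (hy (a k)), hs _ (hy (b k)),
          hs _ (hw k), hπβ k]
        abel
    have hpair : ∀ k, T (a k) + T (b k) = (δ' k + s (w k)) + E k := by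
      intro k
      rw [hT, hδ'def, hEdef]
      show δ (a k) + s (y (a k)) + (δ (b k) + s (y (b k))) = (δ (a k) + δ (b k) + β k + s (w k)) + (s (y (a k)) + s (y (b k)) - s (w k) - β k)
      abel
    have hsum2 : (∑ i, T i) = (∑ k, (δ' k + s (w k))) + ∑ k, E k := by
      rw [hsum, ← Finset.sum_add_distrib]
      exact Finset.sum_congr rfl fun k _ => hpair k
    have hEker : (∑ k, E k) ∈ π.ker := sum_mem fun k _ => hDsub (hED k)
    have hEcl : (∑ k, E k) ∈ AddSubgroup.closure D :=
      sum_mem fun k _ => AddSubgroup.subset_closure (hED k)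
    have hker' : (∑ k, (δ' k + s (w k))) ∈ π.ker := by
      have : (∑ k, (δ' k + s (w k))) = (∑ i, T i) - ∑ k, E k := by
        rw [hsum2]; abel
      rw [this]
      exact sub_mem hker hEker
    have := ih δ' hδ'Δ w hw hker'
    show (∑ i, T i) ∈ AddSubgroup.closure D
    rw [hsum2]
    exact add_mem this hEcl
end

section
/- (Abstract form of Proposition 3.1.) With the hypotheses of the previous claim (G abelian, H = ker π for π : G → V surjective, Y ⊆ V symmetric with 0 ∈ Y and Y + Γ = V for a subgroup Γ ≤ V, section s : Y → G with s(0) = 0, subgroup Δ ≤ G mapped isomorphically onto Γ by π, Δ₀ = {δ ∈ Δ : π(δ) ∈ Y(2)}, D = (Δ₀ + s(Y)(2)) ∩ H), the set D generates the subgroup ⟨s(Y)⟩ ∩ H. -/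
open Pointwise

lemma mSum_subset_closure {G : Type*} [AddCommGroup G] (X : Set G) (n : ℕ) :
    mSum X n ⊆ (AddSubgroup.closure X : Set G) := by
  induction n with
  | zero => intro x hx; simp only [mSum, Set.mem_singleton_iff] at hx; subst hx
            exact zero_mem _
  | succ n ih =>
    rintro x ⟨y, ⟨a, ha, b, hb, rfl⟩, z, hz, rfl⟩
    exact add_mem (sub_mem (AddSubgroup.subset_closure ha) (AddSubgroup.subset_closure hb)) (ih hz)

theorem stmt12 {G V : Type*} [AddCommGroup G] [AddCommGroup V]
    (π : G →+ V) (hsurj : Function.Surjective π)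
    (Y : Set V) (hYsym : Y = -Y) (hY0 : (0 : V) ∈ Y)
    (Γ : AddSubgroup V) (hYΓ : Y + (Γ : Set V) = Set.univ)
    (s : V → G) (hs : ∀ y ∈ Y, π (s y) = y) (hs0 : s 0 = 0)
    (Δ : AddSubgroup G) (hΔinj : Set.InjOn π Δ) (hΔΓ : π '' Δ = Γ)
    (hΔsub : (Δ : Set G) ⊆ AddSubgroup.closure (s '' Y))
    (Δ₀ : Set G) (hΔ₀ : Δ₀ = {δ : G | δ ∈ Δ ∧ π δ ∈ mSum Y 2})
    (D : Set G) (hD : D = (Δ₀ + mSum (s '' Y) 2) ∩ (π.ker : Set G)) :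
    AddSubgroup.closure D = AddSubgroup.closure (s '' Y) ⊓ π.ker := by
  -- choose, for each v, y v ∈ Y and δ v ∈ Δ with π (δ v) = v - y v, with y 0 = 0, δ 0 = 0
  have hchoice : ∀ v : V, ∃ y : V, ∃ δ : G, y ∈ Y ∧ δ ∈ Δ ∧ π δ = v - y ∧
      (v = 0 → y = 0 ∧ δ = 0) := by
    intro v
    by_cases hv : v = 0
    · exact ⟨0, 0, hY0, zero_mem _, by simp [hv], fun _ => ⟨rfl, rfl⟩⟩
    · have : v ∈ Y + (Γ : Set V) := by rw [hYΓ]; trivial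
      obtain ⟨y, hy, γ, hγ, hvyγ⟩ := this
      have : γ ∈ π '' Δ := by rw [hΔΓ]; exact hγ
      obtain ⟨δ, hδ, hπδ⟩ := this
      exact ⟨y, δ, hy, hδ, by
        rw [hπδ, ← hvyγ]; show γ = y + γ - y; rw [add_sub_cancel_left], fun h => absurd h hv⟩
  choose yv δv hyvY hδvΔ hπδv hzero using hchoice
  set σ : V → G := fun v => s (yv v) + δv v with hσ
  have hσ0 : σ 0 = 0 := by
    obtain ⟨h1, h2⟩ := hzero 0 rfl
    simp [hσ, h1, h2, hs0]
  have hπσ : ∀ v, π (σ v) = v := by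
    intro v
    simp [hσ, map_add, hs _ (hyvY v), hπδv v]
  -- key claim: σ v₁ + σ v₂ - σ (v₁ + v₂) ∈ D
  have claim2 : ∀ v₁ v₂ : V, σ v₁ + σ v₂ - σ (v₁ + v₂) ∈ D := by
    intro v₁ v₂
    rw [hD]
    constructor
    · refine ⟨δv v₁ + δv v₂ - δv (v₁ + v₂), ?_,
        (s (yv v₁) - s (yv (v₁ + v₂))) + (s (yv v₂) - s 0), ?_, by simp [hσ, hs0]; abel⟩
      · rw [hΔ₀]
        refine ⟨sub_mem (add_mem (hδvΔ v₁) (hδvΔ v₂)) (hδvΔ (v₁ + v₂)), ?_⟩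
        have : π (δv v₁ + δv v₂ - δv (v₁ + v₂)) =
            (yv (v₁ + v₂) - yv v₁) + (0 - yv v₂) := by
          simp [map_add, map_sub, hπδv]; abel
        rw [this]
        exact mem_mSum_two (hyvY _) (hyvY _) hY0 (hyvY _)
      · exact mem_mSum_two ⟨yv v₁, hyvY _, rfl⟩ ⟨yv (v₁ + v₂), hyvY _, rfl⟩
          ⟨yv v₂, hyvY _, rfl⟩ ⟨0, hY0, rfl⟩
    · show π _ = 0
      simp [map_sub, map_add, hπσ]
  -- claim: s y - σ y ∈ D for y ∈ Y
  have claim1 : ∀ y ∈ Y, s y - σ y ∈ D := by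
    intro y hy
    rw [hD]
    constructor
    · refine ⟨-δv y, ?_, (s y - s (yv y)) + (s 0 - s 0), ?_, by simp [hσ, hs0]; abel⟩
      · rw [hΔ₀]
        refine ⟨neg_mem (hδvΔ y), ?_⟩
        have : π (-δv y) = (yv y - y) + (0 - 0) := by simp [hπδv]
        rw [this]
        exact mem_mSum_two (hyvY _) hy hY0 hY0
      · exact mem_mSum_two ⟨y, hy, rfl⟩ ⟨yv y, hyvY _, rfl⟩ ⟨0, hY0, rfl⟩ ⟨0, hY0, rfl⟩
    · show π _ = 0
      simp [map_sub, hπσ, hs y hy]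
  apply le_antisymm
  · rw [AddSubgroup.closure_le]
    intro d hd
    rw [hD] at hd
    obtain ⟨⟨δ, hδ, t, ht, rfl⟩, hker⟩ := hd
    refine ⟨add_mem ?_ ?_, hker⟩
    · rw [hΔ₀] at hδ
      exact hΔsub hδ.1
    · exact mSum_subset_closure _ 2 ht
  · rintro g ⟨hg1, hg2⟩
    have key : ∀ (x) (hx : x ∈ AddSubgroup.closure (s '' Y)),
        x - σ (π x) ∈ AddSubgroup.closure D := by
      intro x hx
      induction hx using AddSubgroup.closure_induction with
      | mem x hxmem =>
        obtain ⟨y, hy, rfl⟩ := hxmem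
        rw [hs y hy]
        exact AddSubgroup.subset_closure (claim1 y hy)
      | zero => rw [map_zero, hσ0, sub_zero]; exact zero_mem _
      | add x z hx hz ihx ihz =>
        have : x + z - σ (π (x + z)) =
            (x - σ (π x)) + (z - σ (π z)) + (σ (π x) + σ (π z) - σ (π x + π z)) := by
          rw [map_add]; abel
        rw [this]
        exact add_mem (add_mem ihx ihz) (AddSubgroup.subset_closure (claim2 _ _))
      | neg x hx ihx =>
        have : -x - σ (π (-x)) =
            -(x - σ (π x)) - (σ (π x) + σ (-(π x)) - σ (π x + -(π x))) - σ (π x + -(π x)) := by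
          rw [map_neg]; abel
        rw [this]
        have h0 : σ (π x + -π x) = 0 := by rw [add_neg_cancel, hσ0]
        rw [h0]
        simp only [sub_zero]
        have hc := claim2 (π x) (-(π x))
        rw [add_neg_cancel, hσ0, sub_zero] at hc
        exact sub_mem (neg_mem ihx) (AddSubgroup.subset_closure hc)
    have := key g hg1
    rw [hg2, hσ0, sub_zero] at this
    exact this
end
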